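/- There exists a state ρ_ZAA' (two classical bits Z, and qubit registers A, A' jointly in the Bell state determined by Z) and a game in which a player with access to both A and A' can guess Z with probability 1, whereas any measurement on A' alone guesses Z with probability at most 1/4. Hence the conditional max-accessible-information I_max^acc(Z;A|A') is not bounded by H_0(A) = 1 in general. -/

import Mathlib

open scoped Kronecker ComplexOrder
open Matrix

noncomputable section

/-- Partial trace over the first (A) register. -/
def ptraceFst {α β : Type*} [Fintype α] (ρ : Matrix (α × β) (α × β) ℂ) : Matrix β β ℂ :=
  fun i j => ∑ a, ρ (a, i) (a, j)

/-- The Bell state `|β_{z₁ z₂}⟩ = (|0, z₂⟩ + (-1)^{z₁} |1, 1 ⊕ z₂⟩)/√2` on registers `A × A'`. -/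
def bellVec (z : Fin 2 × Fin 2) : Fin 2 × Fin 2 → ℂ :=
  fun ab => if ab.2 = ab.1 + z.2 then ((-1 : ℂ) ^ ((z.1 : ℕ) * (ab.1 : ℕ))) / (Real.sqrt 2 : ℂ)
            else 0

/-- The projector `|β_z⟩⟨β_z|`. -/
def bellProj (z : Fin 2 × Fin 2) : Matrix (Fin 2 × Fin 2) (Fin 2 × Fin 2) ℂ :=
  Matrix.vecMulVec (bellVec z) (star (bellVec z))

/-!
The four Bell states form an orthonormal basis of `A ⊗ A'`, so the Bell measurement identifies `z`
with certainty. On the other hand every Bell state has the maximally mixed marginal `1/2` on `A'`,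
so for any POVM `{G z}` on `A'` the success probability is `(1/4) · (1/2) · Tr (∑ z, G z) = 1/4`,
whatever the measurement.
-/

namespace Matrix

variable {n ι R : Type*} [Fintype n]

theorem trace_vecMulVec_star_mul_self [CommSemiring R] [StarRing R] {v : n → R}
    (hv : star v ⬝ᵥ v = 1) : (vecMulVec v (star v) * vecMulVec v (star v)).trace = 1 := by
  rw [vecMulVec_mul_vecMulVec, hv, one_smul, trace_vecMulVec, dotProduct_comm, hv]

theorem sum_vecMulVec_star_eq_one_of_orthonormal [CommRing R] [StarRing R] [Fintype ι]
    [DecidableEq ι] [DecidableEq n] {v : ι → n → R} (hcard : Fintype.card ι = Fintype.card n)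
    (hv : ∀ i j, star (v i) ⬝ᵥ v j = if i = j then 1 else 0) :
    ∑ i, vecMulVec (v i) (star (v i)) = 1 := by
  let U : Matrix n ι R := of fun a i => v i a
  have hUU : Uᴴ * U = 1 := by
    ext i j
    simpa [U, mul_apply, dotProduct, one_apply] using hv i j
  have hsum : ∑ i, vecMulVec (v i) (star (v i)) = U * Uᴴ := by
    ext a b
    simp [U, mul_apply, sum_apply, vecMulVec_apply]
  rw [hsum, mul_eq_one_comm_of_card_eq _ _ _ hcard.symm, hUU]

theorem sum_trace_mul_smul_one [CommSemiring R] [DecidableEq n] [Fintype ι]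
    {G : ι → Matrix n n R} (hG : ∑ i, G i = 1) (c : R) :
    ∑ i, (G i * c • 1).trace = c * Fintype.card n := by
  simp_rw [Matrix.mul_smul, mul_one, trace_smul, ← Finset.smul_sum, ← trace_sum, hG, trace_one,
    smul_eq_mul]

end Matrix

lemma ofReal_sqrt_two_sq : (Real.sqrt 2 : ℂ) ^ 2 = 2 := by
  rw [← Complex.ofReal_pow, Real.sq_sqrt zero_le_two, Complex.ofReal_ofNat]

lemma bellVec_orthonormal (z w : Fin 2 × Fin 2) :
    star (bellVec z) ⬝ᵥ bellVec w = if z = w then 1 else 0 := by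
  fin_cases z <;> fin_cases w <;>
    simp [dotProduct, Fintype.sum_prod_type, bellVec, Fin.sum_univ_two, map_div₀,
      Complex.conj_ofReal] <;>
    field_simp <;> norm_num [ofReal_sqrt_two_sq]

lemma ptraceFst_bellProj (z : Fin 2 × Fin 2) : ptraceFst (bellProj z) = (1 / 2 : ℂ) • 1 := by
  ext i j
  fin_cases z <;> fin_cases i <;> fin_cases j <;>
    simp [ptraceFst, bellProj, bellVec, vecMulVec, Fin.sum_univ_two] <;>
    field_simp <;> norm_num [ofReal_sqrt_two_sq]

/-- For `ρ_ZAA' = (1/4) Σ_z |z⟩⟨z| ⊗ |Bell_z⟩⟨Bell_z|`: a player measuring both `A` and `A'`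
can guess the two classical bits `Z` with probability 1 (Bell measurement), while any POVM on
`A'` alone guesses `Z` with probability at most `1/4`.  Hence `I_max^acc(Z;A|A')` is not
bounded by `H₀(A) = 1`. -/
theorem stmt6 :
    (∃ F : (Fin 2 × Fin 2) → Matrix (Fin 2 × Fin 2) (Fin 2 × Fin 2) ℂ,
       (∀ z, (F z).PosSemidef) ∧ ∑ z, F z = 1 ∧
       ∑ z, (1 / 4 : ℝ) * ((F z * bellProj z).trace.re) = 1)
    ∧ ∀ G : (Fin 2 × Fin 2) → Matrix (Fin 2) (Fin 2) ℂ,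
       (∀ z, (G z).PosSemidef) → ∑ z, G z = 1 →
       ∑ z, (1 / 4 : ℝ) * ((G z * ptraceFst (bellProj z)).trace.re) ≤ 1 / 4 := by
  refine ⟨⟨bellProj, fun z => posSemidef_vecMulVec_self_star _,
    sum_vecMulVec_star_eq_one_of_orthonormal rfl bellVec_orthonormal, ?_⟩, fun G _ hG => ?_⟩
  · have hnorm z : (bellProj z * bellProj z).trace = 1 :=
      trace_vecMulVec_star_mul_self ((bellVec_orthonormal z z).trans (if_pos rfl))
    simp [hnorm]
  · simp_rw [ptraceFst_bellProj, ← Finset.mul_sum, ← Complex.re_sum,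
      sum_trace_mul_smul_one hG]
    norm_num
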